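/- Under the refinement relation φ̂(x) = (1/g)·p(e^{-ix/g})·φ̂(x/g), the periodization satisfies the identity Π_φ(x) = (1/g²) · ∑_{j=0}^{g-1} |p(e^{-i(x+2πj)/g})|² · Π_φ((x+2πj)/g) for all x ∈ ℝ. -/

import Mathlib

/-!
Splitting `α ∈ ℤ` by its residue `j` modulo `g`, write `α = j + g q`. The refinement relation turns
`|φ̂(x + 2π(j + g q))|²` into `g⁻² |p|² |φ̂|²` evaluated at `(x + 2πj)/g + 2πq`; since `p` is
`2π`-periodic its factor does not depend on `q`, and summing over `q` leaves `Π_φ((x + 2πj)/g)`.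
-/

open Real Finset

theorem Int.sumByResidueClasses {R : Type*} [AddCommGroup R] [UniformSpace R]
    [IsUniformAddGroup R] [CompleteSpace R] [T0Space R] {f : ℤ → R} (hf : Summable f)
    (N : ℕ) [NeZero N] :
    ∑' n, f n = ∑ j ∈ Finset.range N, ∑' q : ℤ, f (j + N * q) := by
  let e : Fin N × ℤ ≃ ℤ := (Equiv.prodComm _ _).trans (Int.divModEquiv N).symm
  have he : ∀ p : Fin N × ℤ, e p = (p.1 : ℕ) + N * p.2 := fun p => by
    simp [e, Int.divModEquiv, add_comm, mul_comm]
  have hfe : Summable fun p => f (e p) := hf.comp_injective e.injective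
  rw [← e.tsum_eq f, hfe.tsum_prod, tsum_fintype,
    ← Fin.sum_univ_eq_sum_range (fun j => ∑' q : ℤ, f (j + N * q))]
  simp only [he]

theorem trigPolynomial_periodic (s : Finset ℤ) (c : ℤ → ℂ) :
    Function.Periodic (fun x : ℝ => ∑ α ∈ s, c α * Complex.exp (-Complex.I * α * x)) (2 * π) := by
  intro x
  refine Finset.sum_congr rfl fun α _ => ?_
  rw [show -Complex.I * α * ((x + 2 * π : ℝ) : ℂ)
      = -Complex.I * α * x + ((-α : ℤ) : ℂ) * (2 * π * Complex.I) by push_cast; ring,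
    Complex.exp_add, Complex.exp_int_mul_two_pi_mul_I, mul_one]

theorem tsum_periodization_eq_of_refinement {F m : ℝ → ℝ} {g : ℕ} [NeZero g]
    (hm : Function.Periodic m (2 * π))
    (hsum : ∀ x : ℝ, Summable fun α : ℤ => F (x + 2 * π * α))
    (href : ∀ x : ℝ, F x = 1 / (g : ℝ) ^ 2 * m (x / g) * F (x / g)) (x : ℝ) :
    ∑' α : ℤ, F (x + 2 * π * α) = 1 / (g : ℝ) ^ 2 *
      ∑ j ∈ range g, m ((x + 2 * π * j) / g) * ∑' α : ℤ, F ((x + 2 * π * j) / g + 2 * π * α) := by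
  have hg : (g : ℝ) ≠ 0 := NeZero.ne _
  have hterm : ∀ (j : ℕ) (q : ℤ), F (x + 2 * π * ((j + g * q : ℤ) : ℝ)) =
      1 / (g : ℝ) ^ 2 * m ((x + 2 * π * j) / g) * F ((x + 2 * π * j) / g + 2 * π * q) := by
    intro j q
    have hsplit : (x + 2 * π * ((j + g * q : ℤ) : ℝ)) / g = (x + 2 * π * j) / g + q * (2 * π) := by
      push_cast
      field_simp
      ring
    rw [href, hsplit, hm.int_mul, mul_comm (q : ℝ)]
  rw [Int.sumByResidueClasses (hsum x) g, mul_sum]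
  refine sum_congr rfl fun j _ => ?_
  rw [tsum_congr (hterm j), tsum_mul_left, mul_assoc]

theorem stmt12_general (g : ℕ) (hg : 2 ≤ g)
    (φhat : ℝ → ℂ)
    (P : ℝ → ℂ) (s : Finset ℤ) (c : ℤ → ℂ)
    (hP : ∀ x : ℝ, P x = ∑ α ∈ s, c α * Complex.exp (-Complex.I * (α : ℂ) * x))
    (hsum : ∀ x : ℝ, Summable fun α : ℤ => ‖φhat (x + 2 * π * α)‖ ^ 2)
    (href : ∀ x : ℝ, φhat x = (1 / g) * P (x / g) * φhat (x / g)) :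
    ∀ x : ℝ, (∑' α : ℤ, ‖φhat (x + 2 * π * α)‖ ^ 2) =
      (1 / (g : ℝ) ^ 2) * ∑ j ∈ Finset.range g,
        ‖P ((x + 2 * π * j) / g)‖ ^ 2 *
          ∑' α : ℤ, ‖φhat ((x + 2 * π * j) / g + 2 * π * α)‖ ^ 2 := by
  have : NeZero g := ⟨by omega⟩
  have hPper : Function.Periodic P (2 * π) := by
    rw [funext hP]
    exact trigPolynomial_periodic s c
  refine tsum_periodization_eq_of_refinement (F := fun y => ‖φhat y‖ ^ 2)
    (hPper.comp fun z => ‖z‖ ^ 2) hsum fun y => ?_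
  simp only [Function.comp_apply, href y, norm_mul, norm_div, norm_one, Complex.norm_natCast]
  ring

theorem stmt12 (g : ℕ) (hg : 2 ≤ g) (φ : ℝ → ℝ) (hcont : Continuous φ)
    (hsupp : HasCompactSupport φ)
    (φhat : ℝ → ℂ)
    (hhat : ∀ x : ℝ, φhat x = ∫ t : ℝ, (φ t : ℂ) * Complex.exp (-Complex.I * t * x))
    (P : ℝ → ℂ) (s : Finset ℤ) (c : ℤ → ℂ)
    (hP : ∀ x : ℝ, P x = ∑ α ∈ s, c α * Complex.exp (-Complex.I * (α : ℂ) * x))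
    (hsum : ∀ x : ℝ, Summable fun α : ℤ => ‖φhat (x + 2 * π * α)‖ ^ 2)
    (href : ∀ x : ℝ, φhat x = (1 / g) * P (x / g) * φhat (x / g)) :
    ∀ x : ℝ, (∑' α : ℤ, ‖φhat (x + 2 * π * α)‖ ^ 2) =
      (1 / (g : ℝ) ^ 2) * ∑ j ∈ Finset.range g,
        ‖P ((x + 2 * π * j) / g)‖ ^ 2 *
          ∑' α : ℤ, ‖φhat ((x + 2 * π * j) / g + 2 * π * α)‖ ^ 2 :=
  stmt12_general g hg φhat P s c hP hsum href
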